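/- Termination criterion of the algorithm: let F : ℝ^m → ℝ be concave and differentiable, let K ⊆ P ⊆ ℝ^m, let z_N ∈ P minimize F over P, and let ẑ ∈ K minimize the linearization z ↦ ⟨∇F(z_N), z⟩ over K. If z_N satisfies the new cut, i.e., ⟨∇F(z_N), z_N − ẑ⟩ ≥ 0, then ẑ minimizes F over K: F(ẑ) ≤ F(z) for all z ∈ K. -/

import Mathlib

open scoped RealInnerProductSpace

noncomputable section

theorem ConcaveOn.le_add_apply_sub_of_hasFDerivAt {E : Type*} [NormedAddCommGroup E]
    [NormedSpace ℝ E] {s : Set E} {f : E → ℝ} {f' : E →L[ℝ] ℝ} {x y : E}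
    (hf : ConcaveOn ℝ s f) (hx : x ∈ s) (hy : y ∈ s) (hf' : HasFDerivAt f f' x) :
    f y ≤ f x + f' (y - x) := by
  let g : ℝ →ᵃ[ℝ] E := AffineMap.lineMap x y
  have hg0 : g 0 = x := AffineMap.lineMap_apply_zero x y
  have hg1 : g 1 = y := AffineMap.lineMap_apply_one x y
  have hline : ConcaveOn ℝ (g ⁻¹' s) (f ∘ g) := hf.comp_affineMap g
  have hderiv : HasDerivAt (f ∘ g) (f' (y - x)) 0 := by
    rw [← hg0] at hf'
    exact hf'.comp_hasDerivAt 0 AffineMap.hasDerivAt_lineMap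
  have hslope := hline.slope_le_of_hasDerivAt (by rwa [Set.mem_preimage, hg0])
    (by rwa [Set.mem_preimage, hg1]) zero_lt_one hderiv
  simp only [slope_def_field, Function.comp_apply, hg0, hg1, sub_zero, div_one] at hslope
  linarith

theorem ConcaveOn.le_add_inner_gradient {E : Type*} [NormedAddCommGroup E]
    [InnerProductSpace ℝ E] [CompleteSpace E] {s : Set E} {f : E → ℝ} {x y : E}
    (hf : ConcaveOn ℝ s f) (hx : x ∈ s) (hy : y ∈ s) (hfx : DifferentiableAt ℝ f x) :
    f y ≤ f x + ⟪gradient f x, y - x⟫ := by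
  simpa using hf.le_add_apply_sub_of_hasFDerivAt hx hy
    (hasGradientAt_iff_hasFDerivAt.mp hfx.hasGradientAt)

theorem cutting_plane_termination_general (m : ℕ) (F : EuclideanSpace ℝ (Fin m) → ℝ)
    (hF : ConcaveOn ℝ Set.univ F)
    (K P : Set (EuclideanSpace ℝ (Fin m))) (hKP : K ⊆ P)
    (zN : EuclideanSpace ℝ (Fin m)) (hdiff : DifferentiableAt ℝ F zN)
    (hzNmin : ∀ z ∈ P, F zN ≤ F z)
    (zhat : EuclideanSpace ℝ (Fin m))
    (hcut : 0 ≤ ⟪gradient F zN, zN - zhat⟫) :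
    ∀ z ∈ K, F zhat ≤ F z := by
  intro z hz
  have htangent : F zhat ≤ F zN + ⟪gradient F zN, zhat - zN⟫ :=
    hF.le_add_inner_gradient (Set.mem_univ _) (Set.mem_univ _) hdiff
  have hcut' : ⟪gradient F zN, zhat - zN⟫ ≤ 0 := by
    rw [← neg_sub, inner_neg_right]
    exact neg_nonpos.mpr hcut
  linarith [hzNmin z (hKP hz)]

/-- Termination criterion of the algorithm: let `F` be concave and differentiable at
`z_N`, let `K ⊆ P`, let `z_N` minimize `F` over `P`, and let `ẑ ∈ K` minimize the
linearization `z ↦ ⟨∇F(z_N), z⟩` over `K`. If `z_N` satisfies the new cut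
`⟨∇F(z_N), z_N − ẑ⟩ ≥ 0`, then `ẑ` minimizes `F` over `K`. -/
theorem cutting_plane_termination (m : ℕ) (F : EuclideanSpace ℝ (Fin m) → ℝ)
    (hF : ConcaveOn ℝ Set.univ F)
    (K P : Set (EuclideanSpace ℝ (Fin m))) (hKP : K ⊆ P)
    (zN : EuclideanSpace ℝ (Fin m)) (hdiff : DifferentiableAt ℝ F zN)
    (hzNP : zN ∈ P) (hzNmin : ∀ z ∈ P, F zN ≤ F z)
    (zhat : EuclideanSpace ℝ (Fin m)) (hzhatK : zhat ∈ K)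
    (hzhatmin : ∀ z ∈ K, ⟪gradient F zN, zhat⟫ ≤ ⟪gradient F zN, z⟫)
    (hcut : 0 ≤ ⟪gradient F zN, zN - zhat⟫) :
    ∀ z ∈ K, F zhat ≤ F z :=
  cutting_plane_termination_general m F hF K P hKP zN hdiff hzNmin zhat hcut
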